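/- Let n, m be integers with 6 ≤ m ≤ 2n−2 and m even, and set θ = 1 if both n and m/2 are even and θ = 0 otherwise. Then R(K_{1,n}, W_m) ≥ 2n + m/2 − θ, where W_m is the wheel obtained by joining a new vertex to all vertices of a cycle C_m. -/

import Mathlib

open SimpleGraph

/-- `G` contains a copy of `H` (as a subgraph). -/
def HasCopy {α β : Type*} (G : SimpleGraph α) (H : SimpleGraph β) : Prop :=
  ∃ f : H →g G, Function.Injective f

/-- The wheel `W m`: a cycle `C m` together with a hub (`none`) adjacent to all cycle vertices. -/
def wheelGraph (m : ℕ) : SimpleGraph (Option (Fin m)) where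
  Adj x y :=
    match x, y with
    | some a, some b => (cycleGraph m).Adj a b
    | some _, none => True
    | none, some _ => True
    | none, none => False
  symm := by
    constructor
    intro x y h
    match x, y with
    | some a, some b => exact (cycleGraph m).adj_symm h
    | some _, none => trivial
    | none, some _ => trivial
  loopless := by
    constructor
    intro x h
    match x with
    | some a => exact (cycleGraph m).irrefl h
    | none => exact h

/-- The star `K_{1,n}`. -/
def starGraph (n : ℕ) : SimpleGraph (Unit ⊕ Fin n) := completeBipartiteGraph Unit (Fin n)

/-- `r` is a Ramsey number for the pair `(G₁, G₂)`. -/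
def IsRamsey {α β : Type*} (G₁ : SimpleGraph α) (G₂ : SimpleGraph β) (r : ℕ) : Prop :=
  ∀ G : SimpleGraph (Fin r), HasCopy G G₁ ∨ HasCopy Gᶜ G₂

/-- The Ramsey number `R(G₁, G₂)`. -/
noncomputable def ramseyNumber {α β : Type*} (G₁ : SimpleGraph α) (G₂ : SimpleGraph β) : ℕ :=
  sInf {r | IsRamsey G₁ G₂ r}

/-! Write `m = 2d + 2`. Take a `d`-regular graph `F` on `b = n + d - θ` vertices all of whose
components have at most `2d + 1` vertices: disjoint copies of `K_{d+1}` together with one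
`d`-regular circulant graph on between `d + 1` and `2d + 1` vertices (`θ` makes `d * b` even, so
that such a circulant exists). Colour with `G = K_n ⊔ Fᶜ`, on `n + b = 2n + m/2 - θ - 1` vertices.
Every vertex of `G` has degree below `n`, so `G` has no `K_{1,n}`. The complement `Gᶜ` is an
independent `n`-set joined to `F`. If a wheel `W_m` of `Gᶜ` has its hub in the independent set,
its rim `C_m` lies in `F`, which is impossible as `F` has no component on `m` vertices. If the hub
lies in `F`, the rim vertices in the independent set are pairwise non-adjacent on the rim, so at
least `m/2 = d + 1` rim vertices are `F`-neighbours of the hub, more than its degree `d`. -/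

open Finset

namespace SimpleGraph

theorem degree_sum_inl {V W : Type*} {G : SimpleGraph V} {H : SimpleGraph W} (v : V)
    [Fintype (G.neighborSet v)] [Fintype ((G ⊕g H).neighborSet (.inl v))] :
    (G ⊕g H).degree (.inl v) = G.degree v := by
  rw [← card_neighborSet_eq_degree, ← card_neighborSet_eq_degree]
  exact Fintype.card_congr <| (Equiv.setCongr (neighborSet_sum_inl v)).trans
    (Equiv.Set.image _ _ Sum.inl_injective).symm

theorem degree_sum_inr {V W : Type*} {G : SimpleGraph V} {H : SimpleGraph W} (w : W)
    [Fintype (H.neighborSet w)] [Fintype ((G ⊕g H).neighborSet (.inr w))] :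
    (G ⊕g H).degree (.inr w) = H.degree w := by
  rw [← card_neighborSet_eq_degree, ← card_neighborSet_eq_degree]
  exact Fintype.card_congr <| (Equiv.setCongr (neighborSet_sum_inr w)).trans
    (Equiv.Set.image _ _ Sum.inr_injective).symm

theorem IsRegularOfDegree.sum {V W : Type*} {G : SimpleGraph V} {H : SimpleGraph W}
    [LocallyFinite G] [LocallyFinite H] [LocallyFinite (G ⊕g H)] {d : ℕ}
    (hG : G.IsRegularOfDegree d) (hH : H.IsRegularOfDegree d) : (G ⊕g H).IsRegularOfDegree d := by
  rintro (v | w)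
  · rw [degree_sum_inl, hG v]
  · rw [degree_sum_inr, hH w]

theorem isRegularOfDegree_boxProd_bot_top {α β : Type*} [Fintype α] [Fintype β] [DecidableEq β] :
    ((⊥ : SimpleGraph α) □ (⊤ : SimpleGraph β)).IsRegularOfDegree (Fintype.card β - 1) := by
  intro x
  rw [degree_boxProd, bot_degree, complete_graph_degree, zero_add]

theorem isRegularOfDegree_circulantGraph {A : Type*} [AddGroup A] [Fintype A] [DecidableEq A]
    {S : Finset A} (h0 : 0 ∉ S) (hneg : ∀ x ∈ S, -x ∈ S) :
    (circulantGraph (S : Set A)).IsRegularOfDegree #S := by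
  intro x
  have hnbr : (circulantGraph (S : Set A)).neighborFinset x = S.image (· + x) := by
    ext y
    simp only [mem_neighborFinset, circulantGraph_adj, mem_coe, mem_image]
    constructor
    · rintro ⟨-, h | h⟩
      · exact ⟨-(x - y), hneg _ h, by rw [neg_sub, sub_add_cancel]⟩
      · exact ⟨y - x, h, sub_add_cancel y x⟩
    · rintro ⟨a, ha, rfl⟩
      refine ⟨fun h => h0 ?_, Or.inr (by rwa [add_sub_cancel_right])⟩
      rwa [right_eq_add.mp h] at ha
  rw [← card_neighborFinset_eq_degree, hnbr, card_image_of_injective _ (add_left_injective x)]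

theorem exists_isNClique_subset_of_card_le_degree_add {V : Type*} [Fintype V] [DecidableEq V]
    {G : SimpleGraph V} [DecidableRel G.Adj] {c : ℕ}
    (hdeg : ∀ v, Fintype.card V ≤ G.degree v + c) :
    ∀ (k : ℕ) (T : Finset V), k * c < #T → ∃ t ⊆ T, G.IsNClique (k + 1) t := by
  intro k
  induction k with
  | zero =>
    intro T hT
    obtain ⟨v, hv⟩ := card_pos.mp (by omega : 0 < #T)
    exact ⟨{v}, by simpa using hv, isNClique_singleton.mpr rfl⟩
  | succ k ih =>
    intro T hT
    obtain ⟨w, hw⟩ := card_pos.mp (by omega : 0 < #T)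
    have hcover : T ⊆ (T ∩ G.neighborFinset w) ∪ (G.neighborFinset w)ᶜ := by
      intro x hx
      by_cases hxw : x ∈ G.neighborFinset w <;> simp [hx, hxw]
    have hnonadj : #(G.neighborFinset w)ᶜ ≤ c := by
      rw [card_compl, card_neighborFinset_eq_degree]
      have := hdeg w
      omega
    have hsplit := (card_le_card hcover).trans (card_union_le _ _)
    obtain ⟨t, ht, hclique⟩ := ih (T ∩ G.neighborFinset w) (by rw [Nat.succ_mul] at hT; omega)
    refine ⟨insert w t, insert_subset hw (ht.trans inter_subset_left), hclique.insert ?_⟩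
    intro b hb
    exact (G.mem_neighborFinset w b).mp (mem_inter.mp (ht hb)).2

theorem IsIndepSet.two_mul_card_le_cycleGraph {k : ℕ} {P : Finset (Fin (k + 2))}
    (hP : (cycleGraph (k + 2)).IsIndepSet P) : 2 * #P ≤ k + 2 := by
  have hdisj : Disjoint (P.image (· + 1)) P := by
    rw [Finset.disjoint_left]
    rintro _ hi' hj
    obtain ⟨i, hi, rfl⟩ := mem_image.mp hi'
    exact hP hi hj (by simp) (by simp [cycleGraph_adj])
  have := (card_union_of_disjoint hdisj).symm.trans_le (card_le_univ _)
  rw [card_image_of_injective _ (add_left_injective 1), Fintype.card_fin] at this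
  omega

theorem Connected.card_le_of_isContained {β V ι : Type*} [Fintype β] {K : SimpleGraph β}
    {F : SimpleGraph V} (hK : K.Connected) (hKF : K ⊑ F) (c : V → ι)
    (hc : ∀ u v, F.Adj u v → c u = c v) {N : ℕ} (ψ : V → Fin N)
    (hinj : Function.Injective fun v => (c v, ψ v)) : Fintype.card β ≤ N := by
  obtain ⟨f⟩ := hKF
  obtain ⟨x₀⟩ := hK.nonempty
  have hreach : ∀ u v, F.Reachable u v → c u = c v := by
    intro u v h
    rw [reachable_iff_reflTransGen] at h
    induction h with
    | refl => rfl
    | tail _ hadj ih => exact ih.trans (hc _ _ hadj)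
  have hlabel (x : β) : c (f x) = c (f x₀) :=
    hreach _ _ ((hK.preconnected x x₀).map f.toHom)
  simpa using Fintype.card_le_of_injective (ψ ∘ f) fun x y h =>
    f.injective (hinj (Prod.ext ((hlabel x).trans (hlabel y).symm) h))

theorem compl_sum_compl_adj_inr {V W : Type*} {G : SimpleGraph V} {H : SimpleGraph W} {u v : W} :
    (G ⊕g Hᶜ)ᶜ.Adj (.inr u) (.inr v) ↔ H.Adj u v := by
  simp only [compl_adj, sum_adj, ne_eq, Sum.inr.injEq]
  exact ⟨fun h => not_not.mp fun h' => h.2 ⟨h.1, h'⟩, fun h => ⟨H.ne_of_adj h, fun h' => h'.2 h⟩⟩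

end SimpleGraph

theorem ZMod.exists_finset_neg_closed_card_eq {d s : ℕ} (hds : d < s) (hpar : Even (d * s)) :
    ∃ S : Finset (ZMod s), 0 ∉ S ∧ (∀ x ∈ S, -x ∈ S) ∧ #S = d := by
  have hs : d % 2 = 1 → s % 2 = 0 := by
    intro hd
    rw [Nat.even_mul, Nat.even_iff, Nat.even_iff] at hpar
    omega
  set k := d / 2
  -- the jumps `±1, …, ±k`, and also `s / 2 = -(s / 2)` when `d` is odd
  set O : Finset ℕ := Icc 1 k ∪ Icc (s - k) (s - 1) ∪ if d % 2 = 1 then {s / 2} else ∅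
  have hO : ∀ j ∈ O, 0 < j ∧ j < s ∧ s - j ∈ O := by
    intro j hj
    simp only [O, mem_union, mem_Icc] at hj ⊢
    split_ifs at hj ⊢ with hd <;> simp only [mem_singleton, notMem_empty, or_false] at hj ⊢ <;>
      have := hs <;> omega
  have hcard : #O = d := by
    have hAB : Disjoint (Icc 1 k) (Icc (s - k) (s - 1)) :=
      disjoint_left.mpr fun j h1 h2 => by simp only [mem_Icc] at h1 h2; omega
    have hABC : Disjoint (Icc 1 k ∪ Icc (s - k) (s - 1)) (if d % 2 = 1 then {s / 2} else ∅) := by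
      split_ifs with hd
      · simp only [disjoint_singleton_right, mem_union, mem_Icc]
        have := hs hd
        omega
      · exact disjoint_empty_right _
    rw [card_union_of_disjoint hABC, card_union_of_disjoint hAB, Nat.card_Icc, Nat.card_Icc]
    split_ifs <;> simp only [card_singleton, card_empty] <;> omega
  refine ⟨O.image (↑), ?_, ?_, ?_⟩
  · simp only [mem_image, not_exists, not_and]
    intro j hj h0
    rw [ZMod.natCast_eq_zero_iff] at h0
    have := hO j hj
    exact absurd (Nat.le_of_dvd this.1 h0) (by omega)
  · simp only [mem_image, forall_exists_index, and_imp]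
    rintro _ j hj rfl
    refine ⟨s - j, (hO j hj).2.2, ?_⟩
    rw [Nat.cast_sub (hO j hj).2.1.le, ZMod.natCast_self, zero_sub]
  · rw [card_image_of_injOn, hcard]
    intro i hi j hj hij
    simpa [ZMod.natCast_eq_natCast_iff', Nat.mod_eq_of_lt (hO i hi).2.1,
      Nat.mod_eq_of_lt (hO j hj).2.1] using hij

theorem exists_isRegularOfDegree_not_cycleGraph_isContained {d b : ℕ} (hdb : d < b)
    (hpar : Even (d * b)) :
    ∃ (W : Type) (_ : Fintype W) (F : SimpleGraph W) (_ : DecidableRel F.Adj),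
      Fintype.card W = b ∧ F.IsRegularOfDegree d ∧ ¬ cycleGraph (2 * d + 2) ⊑ F := by
  obtain ⟨c, s, rfl, hs₁, hs₂⟩ : ∃ c s, b = c * (d + 1) + s ∧ d < s ∧ s ≤ 2 * d + 1 := by
    refine ⟨b / (d + 1) - 1, b % (d + 1) + (d + 1), ?_, by omega, ?_⟩
    · have := Nat.div_add_mod' b (d + 1)
      have := Nat.le_mul_of_pos_left (d + 1) (Nat.div_pos (by omega : d + 1 ≤ b) (by omega))
      rw [Nat.sub_one_mul]
      omega
    · have := Nat.mod_lt b (by omega : 0 < d + 1)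
      omega
  have hs : Even (d * s) := by
    have : d * (c * (d + 1) + s) = c * (d * (d + 1)) + d * s := by ring
    rwa [this, Nat.even_add, iff_true_left ((Nat.even_mul_succ_self d).mul_left c)] at hpar
  have : NeZero s := ⟨by omega⟩
  obtain ⟨S, h0, hneg, hS⟩ := ZMod.exists_finset_neg_closed_card_eq hs₁ hs
  classical
  refine ⟨(Fin c × Fin (d + 1)) ⊕ ZMod s, inferInstance,
    ((⊥ : SimpleGraph (Fin c)) □ (⊤ : SimpleGraph (Fin (d + 1)))) ⊕g circulantGraph (S : Set _),
    inferInstance, by simp [ZMod.card], ?_, fun h => ?_⟩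
  · convert IsRegularOfDegree.sum
      (by simpa using isRegularOfDegree_boxProd_bot_top (α := Fin c) (β := Fin (d + 1)))
      (hS ▸ isRegularOfDegree_circulantGraph h0 hneg)
  · -- a vertex is determined by its component and its index in that component, below `2d + 1`
    let ψ : (Fin c × Fin (d + 1)) ⊕ ZMod s → Fin (2 * d + 1) :=
      Sum.elim (fun p => Fin.castLE (by omega) p.2) fun x => ⟨x.val, (ZMod.val_lt x).trans_le hs₂⟩
    have := Connected.card_le_of_isContained cycleGraph_connected h (Sum.map Prod.fst fun _ => ())
      ?_ ψ ?_
    · simp at this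
    · rintro (p | x) (p' | y) h <;> simp [boxProd_adj] at h ⊢
      exact h.2
    · rintro (p | x) (p' | y) h <;> simp [ψ, Prod.ext_iff, Fin.ext_iff] at h ⊢
      · exact h
      · exact ZMod.val_injective s h

theorem hasCopy_iff_isContained {α β : Type*} {G : SimpleGraph α} {H : SimpleGraph β} :
    HasCopy G H ↔ H ⊑ G :=
  ⟨fun ⟨f, hf⟩ => ⟨⟨f, hf⟩⟩, fun ⟨f⟩ => ⟨f.toHom, f.injective⟩⟩

theorem starGraph_isContained_iff {V : Type*} [Fintype V] {G : SimpleGraph V}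
    [DecidableRel G.Adj] {n : ℕ} : _root_.starGraph n ⊑ G ↔ ∃ v, n ≤ G.degree v := by
  constructor
  · rintro ⟨f⟩
    refine ⟨f (.inl ()), ?_⟩
    have := card_le_card_of_injOn (s := univ) (t := G.neighborFinset (f (.inl ())))
      (fun i : Fin n => f (.inr i))
      (fun i _ => by simpa using f.toHom.map_adj (by simp [_root_.starGraph]))
      (fun i _ j _ h => Sum.inr_injective (f.injective h))
    rwa [card_univ, Fintype.card_fin] at this
  · rintro ⟨v, hv⟩
    obtain ⟨e⟩ : Nonempty (Fin n ↪ G.neighborSet v) :=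
      Function.Embedding.nonempty_of_card_le (by rwa [Fintype.card_fin, card_neighborSet_eq_degree])
    refine ⟨⟨⟨Sum.elim (fun _ => v) (fun i => e i), ?_⟩, ?_⟩⟩
    · rintro (_ | i) (_ | j) h <;> simp [_root_.starGraph] at h ⊢
      · exact (e j).2
      · exact (e i).2.symm
    · rintro (_ | i) (_ | j) h <;> simp at h ⊢
      · exact G.ne_of_adj (e j).2 h
      · exact G.ne_of_adj (e i).2 h.symm
      · exact e.injective (Subtype.ext h)

theorem wheelGraph_isContained_of_not_cliqueFree {V : Type*} {G : SimpleGraph V} {m : ℕ}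
    (h : ¬ G.CliqueFree (m + 1)) : wheelGraph m ⊑ G := by
  have := (cliqueFree_iff_top_free (β := Option (Fin m)) (G := G)).not
  rw [Fintype.card_option, Fintype.card_fin, not_not] at this
  exact (this.mp h).mono_left le_top

theorem isRamsey_starGraph_wheelGraph (n m : ℕ) :
    IsRamsey (_root_.starGraph n) (wheelGraph m) (m * n + 1) := by
  classical
  intro G
  simp only [hasCopy_iff_isContained, starGraph_isContained_iff]
  refine or_iff_not_imp_left.mpr fun hstar => wheelGraph_isContained_of_not_cliqueFree ?_
  simp only [not_exists, not_le] at hstar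
  have hdeg : ∀ v, Fintype.card (Fin (m * n + 1)) ≤ Gᶜ.degree v + n := by
    intro v
    have := hstar v
    rw [degree_compl]
    omega
  obtain ⟨t, -, ht⟩ := exists_isNClique_subset_of_card_le_degree_add hdeg m univ (by simp)
  exact ht.not_cliqueFree

theorem lt_ramseyNumber_of_free {α β V : Type*} [Fintype V] {G₁ : SimpleGraph α}
    {G₂ : SimpleGraph β} {r : ℕ} (hr : IsRamsey G₁ G₂ r) (G : SimpleGraph V)
    (h₁ : ¬ G₁ ⊑ G) (h₂ : ¬ G₂ ⊑ Gᶜ) : Fintype.card V < ramseyNumber G₁ G₂ := by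
  refine le_csInf ⟨r, hr⟩ fun r' hr' => ?_
  by_contra! hle
  obtain ⟨ι⟩ : Nonempty (Fin r' ↪ V) := Function.Embedding.nonempty_of_card_le (by simpa using hle)
  rcases hr' (G.comap ι) with h | h <;> rw [hasCopy_iff_isContained] at h
  · exact h₁ (h.trans (Embedding.comap ι G).isContained)
  · exact h₂ (h.trans (Embedding.complEquiv (Embedding.comap ι G)).isContained)

section WheelInJoin

variable {α W : Type*} {F : SimpleGraph W} {k : ℕ}
  (f : Copy (wheelGraph (k + 2)) ((⊤ : SimpleGraph α) ⊕g Fᶜ)ᶜ)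

theorem cycleGraph_isContained_of_hub_eq_inl {a : α} (hc : f none = .inl a) :
    cycleGraph (k + 2) ⊑ F := by
  have hright (i : Fin (k + 2)) : ∃ u, f (some i) = .inr u := by
    have : ((⊤ : SimpleGraph α) ⊕g Fᶜ)ᶜ.Adj (f none) (f (some i)) := f.toHom.map_adj trivial
    rcases hfi : f (some i) with b | u
    · simp [hc, hfi] at this
    · exact ⟨u, rfl⟩
  choose g hg using hright
  refine ⟨⟨g, fun {i j} hij => ?_⟩, fun i j hij => ?_⟩
  · have := f.toHom.map_adj (show (wheelGraph (k + 2)).Adj (some i) (some j) from hij)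
    rwa [Copy.toHom_apply, Copy.toHom_apply, hg, hg, compl_sum_compl_adj_inr] at this
  · exact Option.some_injective _ (f.injective ((hg i).trans ((congrArg _ hij).trans (hg j).symm)))

theorem le_two_mul_degree_of_hub_eq_inr [Fintype W] [DecidableRel F.Adj] {w : W}
    (hc : f none = .inr w) : k + 2 ≤ 2 * F.degree w := by
  set P := univ.filter fun i => (f (some i)).isLeft
  have hP : (cycleGraph (k + 2)).IsIndepSet P := by
    intro i hi j hj _ hij
    simp only [P, coe_filter, mem_univ, true_and, Set.mem_ofPred_eq, Sum.isLeft_iff] at hi hj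
    obtain ⟨a, ha⟩ := hi
    obtain ⟨b, hb⟩ := hj
    simpa [ha, hb] using f.toHom.map_adj (show (wheelGraph (k + 2)).Adj (some i) (some j) from hij)
  have hQ : #Pᶜ ≤ F.degree w := by
    refine (card_le_card_of_injOn (t := (F.neighborFinset w).map .inr) (fun i => f (some i))
      (fun i hi => ?_) (fun i _ j _ hij => Option.some_injective _ (f.injective hij))).trans
      (card_map _).le
    obtain ⟨u, hu⟩ : ∃ u, f (some i) = .inr u := by simpa [P, ← Sum.isRight_iff] using hi
    have := f.toHom.map_adj (show (wheelGraph _).Adj none (some i) from trivial)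
    rw [Copy.toHom_apply, Copy.toHom_apply, hc, hu, compl_sum_compl_adj_inr] at this
    simpa [hu] using this
  have := hP.two_mul_card_le_cycleGraph
  rw [card_compl, Fintype.card_fin] at hQ
  omega

end WheelInJoin

theorem cycleGraph_isContained_or_le_degree_of_wheelGraph_isContained {α W : Type*} [Fintype W]
    {F : SimpleGraph W} [DecidableRel F.Adj] {k : ℕ}
    (h : wheelGraph (k + 2) ⊑ ((⊤ : SimpleGraph α) ⊕g Fᶜ)ᶜ) :
    cycleGraph (k + 2) ⊑ F ∨ ∃ w, k + 2 ≤ 2 * F.degree w := by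
  obtain ⟨f⟩ := h
  rcases hc : f none with a | w
  · exact .inl (cycleGraph_isContained_of_hub_eq_inl f hc)
  · exact .inr ⟨w, le_two_mul_degree_of_hub_eq_inr f hc⟩

theorem lt_ramseyNumber_of_isRegularOfDegree {W : Type*} [Fintype W] {F : SimpleGraph W}
    [DecidableRel F.Adj] {n d : ℕ} (hreg : F.IsRegularOfDegree d)
    (hcyc : ¬ cycleGraph (2 * d + 2) ⊑ F) (hW : Fintype.card W ≤ n + d) :
    n + Fintype.card W < ramseyNumber (_root_.starGraph n) (wheelGraph (2 * d + 2)) := by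
  classical
  have hstar : ¬ _root_.starGraph n ⊑ (⊤ : SimpleGraph (Fin n)) ⊕g Fᶜ := by
    rw [starGraph_isContained_iff]
    rintro ⟨v | w, hv⟩
    · rw [degree_sum_inl, complete_graph_degree, Fintype.card_fin] at hv
      have := v.pos
      omega
    · rw [degree_sum_inr, degree_compl, hreg w] at hv
      have := hreg w ▸ F.degree_lt_card_verts w
      omega
  have hwheel : ¬ wheelGraph (2 * d + 2) ⊑ ((⊤ : SimpleGraph (Fin n)) ⊕g Fᶜ)ᶜ := by
    intro h
    rcases cycleGraph_isContained_or_le_degree_of_wheelGraph_isContained h with h | ⟨w, hw⟩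
    · exact hcyc h
    · rw [hreg w] at hw
      omega
  simpa using lt_ramseyNumber_of_free (isRamsey_starGraph_wheelGraph _ _) _ hstar hwheel

theorem even_mul_add_sub_ite (n d : ℕ) :
    Even (d * (n + d - if Even n ∧ Even (d + 1) then 1 else 0)) := by
  rcases Nat.even_or_odd d with hd | hd
  · exact hd.mul_right _
  refine Even.mul_left ?_ d
  rcases Nat.even_or_odd n with hn | hn
  · rw [if_pos ⟨hn, hd.add_one⟩, Nat.even_iff]
    rw [Nat.even_iff] at hn
    rw [Nat.odd_iff] at hd
    omega
  · rw [if_neg fun h => Nat.not_even_iff_odd.mpr hn h.1, Nat.sub_zero]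
    exact hn.add_odd hd

/-- Lower bound: for even `m` with `6 ≤ m ≤ 2n-2`,
`R(K_{1,n}, W_m) ≥ 2n + m/2 - θ`, where `θ = 1` if both `n` and `m/2` are even
and `θ = 0` otherwise. -/
theorem star_wheel_ramsey_lower (n m : ℕ) (hm6 : 6 ≤ m) (hm : m ≤ 2 * n - 2)
    (hme : Even m) :
    2 * n + m / 2 - (if Even n ∧ Even (m / 2) then 1 else 0) ≤
      ramseyNumber (_root_.starGraph n) (wheelGraph m) := by
  obtain ⟨d, rfl⟩ : ∃ d, m = 2 * d + 2 := ⟨m / 2 - 1, by obtain ⟨r, hr⟩ := hme; omega⟩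
  rw [show (2 * d + 2) / 2 = d + 1 by omega]
  have hpar := even_mul_add_sub_ite n d
  have hθ : (if Even n ∧ Even (d + 1) then 1 else 0) ≤ 1 := by split_ifs <;> omega
  generalize (if Even n ∧ Even (d + 1) then 1 else 0) = θ at hpar hθ ⊢
  obtain ⟨W, _, F, _, hcard, hreg, hcyc⟩ :=
    exists_isRegularOfDegree_not_cycleGraph_isContained (b := n + d - θ) (by omega) hpar
  have := lt_ramseyNumber_of_isRegularOfDegree (n := n) hreg hcyc (by omega)
  omega
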